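/- arXiv:2510.25083 — 6 statements merged into one kernel-verified Lean document; each statement's English description precedes it below -/
import Mathlib

section
/- Let X be a simplicial complex on n vertices, k \geq 0, and \sigma \in X(k). Then \sum_{v \in \sigma} deg_{G_X}(v) \leq kn + deg_X(\sigma) + \sum_{j=0}^{k+1} |\sigma[j]|. -/
open Finset Matrix BigOperators

noncomputable section

/-- An abstract simplicial complex on the vertex set `Fin n`
(faces are finite sets of vertices, closed under taking subsets,
containing the empty face). -/
structure SC (n : ℕ) where
  faces : Finset (Finset (Fin n))
  empty_mem : ∅ ∈ faces
  down_closed : ∀ ⦃σ⦄, σ ∈ faces → ∀ ⦃τ : Finset (Fin n)⦄, τ ⊆ σ → τ ∈ faces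

namespace SC

variable {n : ℕ}

/-- the faces with exactly `k` vertices, i.e. the faces of dimension `k-1`;
so `X.face (k+1)` plays the role of `X(k)` in the paper. -/
abbrev face (X : SC n) (k : ℕ) : Type := {σ : Finset (Fin n) // σ ∈ X.faces ∧ σ.card = k}

/-- the incidence sign `(τ:σ) = (-1)^{#{v ∈ τ : v < u}}`, `u` the unique vertex of `τ \ σ`
(meaningful when `σ ⊂ τ` with `|τ \ σ| = 1`). -/
def iSgn (σ τ : Finset (Fin n)) : ℝ :=
  ∑ u ∈ τ \ σ, (-1 : ℝ) ^ (τ.filter (fun v => v < u)).card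

/-- the boundary matrix from `(k+1)`-element faces to `k`-element faces
(i.e. `∂_k` of the paper, in the paper's dimension indexing). -/
def bdry (X : SC n) (k : ℕ) : Matrix (X.face k) (X.face (k+1)) ℝ :=
  Matrix.of fun σ τ => if σ.1 ⊆ τ.1 then iSgn σ.1 τ.1 else 0

/-- the `k`-dimensional combinatorial Laplacian `L_k(X)`,
indexed by faces with `k+1` vertices. -/
def lap (X : SC n) (k : ℕ) : Matrix (X.face (k+1)) (X.face (k+1)) ℝ :=
  X.bdry (k+1) * (X.bdry (k+1))ᴴ + (X.bdry k)ᴴ * X.bdry k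

/-- degree of the vertex `u` in the 1-skeleton graph `G_X`. -/
def gdeg (X : SC n) (u : Fin n) : ℕ :=
  (Finset.univ.filter (fun v => v ≠ u ∧ insert u {v} ∈ X.faces)).card

/-- the graph Laplacian `L(G_X)` of the 1-skeleton `G_X`. -/
def glap (X : SC n) : Matrix (Fin n) (Fin n) ℝ :=
  Matrix.of fun u v =>
    if u = v then (X.gdeg u : ℝ) else if insert u {v} ∈ X.faces then -1 else 0

/-- degree of a face: the number of faces of `X` with one more vertex containing it. -/
def fdeg (X : SC n) (σ : Finset (Fin n)) : ℕ :=
  (X.faces.filter (fun τ => τ.card = σ.card + 1 ∧ σ ⊆ τ)).card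

/-- the vertex `u` belongs to the link of `σ` in `X`. -/
def vLk (X : SC n) (u : Fin n) (σ : Finset (Fin n)) : Prop :=
  u ∉ σ ∧ insert u σ ∈ X.faces

instance (X : SC n) (u : Fin n) (σ : Finset (Fin n)) : Decidable (X.vLk u σ) := by
  unfold vLk; infer_instance

/-- the set `σ[j]`: vertices `u ∉ lk_X(σ)` with `u ∈ lk_X(v)` for all `v ∈ σ` and
`|{w ∈ σ : u ∈ lk_X(σ \ {w})}| = j`. -/
def dset (X : SC n) (σ : Finset (Fin n)) (j : ℕ) : Finset (Fin n) :=
  Finset.univ.filter (fun u => ¬ X.vLk u σ ∧ (∀ v ∈ σ, X.vLk u {v}) ∧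
    (σ.filter (fun w => X.vLk u (σ.erase w))).card = j)

/-- `X.nonface k` is the set of `k`-element vertex subsets that are not faces;
so `X.nonface (k+1)` is `\overline{X(k)}` of the paper. -/
def nonface (X : SC n) (k : ℕ) : Finset (Finset (Fin n)) :=
  (Finset.powersetCard k (Finset.univ : Finset (Fin n))).filter (fun σ => σ ∉ X.faces)

end SC

/-- the all-ones matrix `J`. -/
def Jmat (n : ℕ) : Matrix (Fin n) (Fin n) ℝ := Matrix.of fun _ _ => 1

open scoped Classical in
/-- the eigenvalues of a real symmetric matrix, sorted increasingly (junk `[]` otherwise). -/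
def eigList {m : Type*} [Fintype m] [DecidableEq m] (A : Matrix m m ℝ) : List ℝ :=
  if h : A.IsHermitian then (Finset.univ.val.map h.eigenvalues).sort (· ≤ ·) else []

/-- `λ_i(A)`: the `i`-th smallest eigenvalue (1-based). -/
def ithEig {m : Type*} [Fintype m] [DecidableEq m] (A : Matrix m m ℝ) (i : ℕ) : ℝ :=
  (eigList A).getD (i - 1) 0

/-- `S_{k,i}(A)`: the `i`-th smallest (1-based) element of the multiset of sums of `k`
eigenvalues `∑_{j ∈ A} λ_j(A)` over all `k`-element index subsets. -/
def Ssum {n : ℕ} (A : Matrix (Fin n) (Fin n) ℝ) (k i : ℕ) : ℝ :=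
  ((((Finset.univ : Finset (Fin n)).powersetCard k).val.map
      (fun S : Finset (Fin n) => ∑ j ∈ S, (eigList A).getD (j : ℕ) 0)).sort (· ≤ ·)).getD (i - 1) 0

/-- `max_{σ ∈ X(k)} ∑_{j=0}^{k+1} (j+1)|σ[j]|`. -/
def maxD {n : ℕ} (X : SC n) (k : ℕ) : ℕ :=
  Finset.univ.sup fun σ : X.face (k+1) =>
    ∑ j ∈ Finset.range (k+2), (j+1) * (X.dset σ.1 j).card

/-- the matrix `P` of the decomposition `L_k(X) = Q - P`. -/
def Pmat {n : ℕ} (X : SC n) (k : ℕ) : Matrix (X.face (k+1)) (X.face (k+1)) ℝ :=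
  Matrix.of fun σ τ =>
    if σ = τ then (∑ v ∈ σ.1, (X.gdeg v : ℝ)) - (X.fdeg σ.1 : ℝ)
    else if (σ.1 ∩ τ.1).card = k ∧ σ.1 ∪ τ.1 ∉ X.faces ∧ (σ.1 \ τ.1) ∪ (τ.1 \ σ.1) ∈ X.faces then
      -(SC.iSgn (σ.1 ∩ τ.1) σ.1 * SC.iSgn (σ.1 ∩ τ.1) τ.1)
    else 0

/-- the matrix `Q` of the decomposition `L_k(X) = Q - P`. -/
def Qmat {n : ℕ} (X : SC n) (k : ℕ) : Matrix (X.face (k+1)) (X.face (k+1)) ℝ :=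
  Matrix.of fun σ τ =>
    if σ = τ then (∑ v ∈ σ.1, (X.gdeg v : ℝ)) + (k : ℝ) + 1
    else if (σ.1 ∩ τ.1).card = k ∧ σ.1 ∪ τ.1 ∉ X.faces ∧ (σ.1 \ τ.1) ∪ (τ.1 \ σ.1) ∉ X.faces then
      SC.iSgn (σ.1 ∩ τ.1) σ.1 * SC.iSgn (σ.1 ∩ τ.1) τ.1
    else 0

/-- incidence sign with values in an arbitrary field. -/
def iSgnF {F : Type*} [Field F] {n : ℕ} (σ τ : Finset (Fin n)) : F :=
  ∑ u ∈ τ \ σ, (-1 : F) ^ (τ.filter (fun v => v < u)).card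

/-- the `k`-th additive compound matrix `M^{[k]}`, indexed by `k`-element subsets of `Fin n`. -/
def addCompound {F : Type*} [Field F] {n : ℕ} (M : Matrix (Fin n) (Fin n) F) (k : ℕ) :
    Matrix {S : Finset (Fin n) // S.card = k} {S : Finset (Fin n) // S.card = k} F :=
  Matrix.of fun σ τ =>
    if σ = τ then ∑ i ∈ σ.1, M i i
    else if (σ.1 ∩ τ.1).card = k - 1 then
      (iSgnF (σ.1 ∩ τ.1) σ.1 * iSgnF (σ.1 ∩ τ.1) τ.1) *
        ∑ i ∈ σ.1 \ τ.1, ∑ j ∈ τ.1 \ σ.1, M i j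
    else 0

end

/-!
Count the pairs `(v, u)` with `v ∈ σ` and `u` adjacent to `v` by `u`: a vertex adjacent to at
most `k` vertices of `σ` contributes at most `k`, which gives `kn`, and each common neighbour of
all of `σ` contributes one more. A common neighbour `u` either lies in the link of `σ`, and then
`σ ∪ {u}` is one of the `deg_X(σ)` cofaces of `σ`, or it lies in `σ[j]` for
`j = |{w ∈ σ : u ∈ lk_X(σ \ {w})}| ≤ k + 1`.
-/

theorem Finset.sum_card_filter_le_mul_add {α β : Type*} (t : Finset α) (s : Finset β)
    (p : α → β → Prop) [∀ u, DecidablePred (p u)] [DecidablePred fun u => ∀ v ∈ s, p u v]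
    {k : ℕ} (hs : #s ≤ k + 1) :
    ∑ u ∈ t, #(s.filter (p u)) ≤ k * #t + #(t.filter fun u => ∀ v ∈ s, p u v) :=
  calc ∑ u ∈ t, #(s.filter (p u)) ≤ ∑ u ∈ t, (k + if ∀ v ∈ s, p u v then 1 else 0) :=
        sum_le_sum fun u _ => by
          split_ifs with h
          · exact (card_filter_le _ _).trans hs
          · push Not at h
            have := card_lt_card (filter_ssubset.2 h)
            omega
    _ = k * #t + #(t.filter fun u => ∀ v ∈ s, p u v) := by
        rw [sum_add_distrib, sum_const, smul_eq_mul, card_filter, mul_comm]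

namespace SC

variable {n : ℕ} (X : SC n)

theorem gdeg_eq_card_filter_vLk (v : Fin n) : X.gdeg v = #(univ.filter fun u => X.vLk u {v}) := by
  simp only [gdeg, vLk, mem_singleton, pair_comm v, ne_comm]

theorem sum_gdeg_eq_sum_card_filter_vLk (σ : Finset (Fin n)) :
    ∑ v ∈ σ, X.gdeg v = ∑ u, #(σ.filter fun v => X.vLk u {v}) := by
  simp only [gdeg_eq_card_filter_vLk, card_filter]
  exact sum_comm

theorem card_filter_vLk_le_fdeg (σ : Finset (Fin n)) : #(univ.filter (X.vLk · σ)) ≤ X.fdeg σ := by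
  refine card_le_card_of_injOn (insert · σ) (fun u hu => ?_) (fun u hu u' _ h => ?_)
  · obtain ⟨huσ, hface⟩ := (mem_filter.1 hu).2
    simp only [coe_filter, Set.mem_ofPred_eq]
    exact ⟨hface, card_insert_of_notMem huσ, subset_insert _ _⟩
  · exact (insert_inj (mem_filter.1 hu).2.1).1 h

theorem card_filter_forall_vLk_le (σ : Finset (Fin n)) :
    #(univ.filter fun u => ∀ v ∈ σ, X.vLk u {v}) ≤
      X.fdeg σ + ∑ j ∈ range (#σ + 1), #(X.dset σ j) := by
  have hsub : (univ.filter fun u => ∀ v ∈ σ, X.vLk u {v}) ⊆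
      univ.filter (X.vLk · σ) ∪ (range (#σ + 1)).biUnion (X.dset σ) := by
    intro u hu
    rw [mem_filter] at hu
    by_cases h : X.vLk u σ
    · exact mem_union_left _ (by simp [h])
    · refine mem_union_right _ (mem_biUnion.2 ⟨_, mem_range.2 (Nat.lt_succ_of_le
        (card_filter_le σ fun w => X.vLk u (σ.erase w))), ?_⟩)
      simpa [dset, h] using hu.2
  calc _ ≤ _ := card_le_card hsub
    _ ≤ _ := card_union_le _ _
    _ ≤ _ := add_le_add (X.card_filter_vLk_le_fdeg σ) card_biUnion_le

end SC

theorem stmt3_general (n k : ℕ) (X : SC n)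
    (σ : Finset (Fin n)) (hc : σ.card = k + 1) :
    ∑ v ∈ σ, X.gdeg v ≤ k * n + X.fdeg σ + ∑ j ∈ Finset.range (k + 2), (X.dset σ j).card := by
  have hcommon := X.card_filter_forall_vLk_le σ
  rw [hc] at hcommon
  calc ∑ v ∈ σ, X.gdeg v = ∑ u, #(σ.filter fun v => X.vLk u {v}) :=
        X.sum_gdeg_eq_sum_card_filter_vLk σ
    _ ≤ k * n + #(univ.filter fun u => ∀ v ∈ σ, X.vLk u {v}) := by
        have := sum_card_filter_le_mul_add univ σ (fun u v => X.vLk u {v}) hc.le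
        rwa [card_fin] at this
    _ ≤ _ := by
        rw [Nat.add_assoc]
        exact Nat.add_le_add_left hcommon _

/-- For `σ ∈ X(k)`:
`∑_{v ∈ σ} deg_{G_X}(v) ≤ kn + deg_X(σ) + ∑_{j=0}^{k+1} |σ[j]|`. -/
theorem stmt3 (n k : ℕ) (X : SC n) (hfull : ∀ v : Fin n, {v} ∈ X.faces)
    (σ : Finset (Fin n)) (hσ : σ ∈ X.faces) (hc : σ.card = k + 1) :
    ∑ v ∈ σ, X.gdeg v ≤ k * n + X.fdeg σ + ∑ j ∈ Finset.range (k + 2), (X.dset σ j).card :=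
  stmt3_general n k X σ hc
end

section
/- Let X be a simplicial complex, k \geq 0, and \sigma \in X(k). The number of faces \tau \in X(k) with |\sigma \cap \tau| = k, \sigma \cup \tau \notin X(k+1), and (\sigma \setminus \tau) \cup (\tau \setminus \sigma) \in X, equals \sum_{j=1}^{k+1} j \cdot |\sigma[j]|. -/
open Finset Matrix BigOperators

lemma stmt4_aux {n k : ℕ} (X : SC n) (σ : Finset (Fin n)) (hc : σ.card = k + 1)
    (u w : Fin n) (hw : w ∈ σ) (h1 : ¬ X.vLk u σ) (h2 : ∀ v ∈ σ, X.vLk u {v})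
    (h3 : X.vLk u (σ.erase w)) :
    insert u (σ.erase w) ∈ X.faces ∧ (insert u (σ.erase w)).card = k + 1 ∧
    (σ ∩ insert u (σ.erase w)).card = k ∧ σ ∪ insert u (σ.erase w) ∉ X.faces ∧
    (σ \ insert u (σ.erase w)) ∪ (insert u (σ.erase w) \ σ) ∈ X.faces := by
  have huσ : u ∉ σ := fun hu => (h2 u hu).1 (Finset.mem_singleton_self u)
  have huw : u ≠ w := fun h => huσ (h ▸ hw)
  have hcap : σ ∩ insert u (σ.erase w) = σ.erase w := by
    ext x
    simp only [Finset.mem_inter, Finset.mem_insert, Finset.mem_erase]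
    constructor
    · rintro ⟨hx, rfl | hx2⟩
      · exact absurd hx huσ
      · exact hx2
    · rintro ⟨hxw, hxσ⟩; exact ⟨hxσ, Or.inr ⟨hxw, hxσ⟩⟩
  have hcup : σ ∪ insert u (σ.erase w) = insert u σ := by
    ext x
    simp only [Finset.mem_union, Finset.mem_insert, Finset.mem_erase]
    constructor
    · rintro (hx | rfl | ⟨_, hx⟩)
      · exact Or.inr hx
      · exact Or.inl rfl
      · exact Or.inr hx
    · rintro (rfl | hx)
      · exact Or.inr (Or.inl rfl)
      · exact Or.inl hx
  have hsd1 : σ \ insert u (σ.erase w) = {w} := by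
    ext x
    simp only [Finset.mem_sdiff, Finset.mem_insert, Finset.mem_erase, Finset.mem_singleton]
    constructor
    · rintro ⟨hx, hx2⟩
      by_contra hxw
      exact hx2 (Or.inr ⟨hxw, hx⟩)
    · rintro rfl
      refine ⟨hw, ?_⟩
      rintro (rfl | ⟨h, _⟩)
      · exact huw rfl
      · exact h rfl
  have hsd2 : insert u (σ.erase w) \ σ = {u} := by
    ext x
    simp only [Finset.mem_sdiff, Finset.mem_insert, Finset.mem_erase, Finset.mem_singleton]
    constructor
    · rintro ⟨rfl | ⟨_, hx⟩, hx2⟩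
      · rfl
      · exact absurd hx hx2
    · rintro rfl; exact ⟨Or.inl rfl, huσ⟩
  have hue : u ∉ σ.erase w := fun h => huσ (Finset.mem_of_mem_erase h)
  refine ⟨h3.2, ?_, ?_, ?_, ?_⟩
  · rw [Finset.card_insert_of_notMem hue, Finset.card_erase_of_mem hw, hc]
    omega
  · rw [hcap, Finset.card_erase_of_mem hw, hc]
    omega
  · rw [hcup]
    intro h
    exact h1 ⟨huσ, h⟩
  · rw [hsd1, hsd2]
    have : ({w} : Finset (Fin n)) ∪ {u} = insert u {w} := by
      ext x; simp [or_comm]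
    rw [this]
    exact (h2 w hw).2

/-- For `σ ∈ X(k)`, the number of `τ ∈ X(k)` with `|σ ∩ τ| = k`,
`σ ∪ τ ∉ X(k+1)` and `(σ \ τ) ∪ (τ \ σ) ∈ X` equals `∑_{j=1}^{k+1} j |σ[j]|`. -/
theorem stmt4 (n k : ℕ) (X : SC n) (σ : Finset (Fin n)) (hσ : σ ∈ X.faces)
    (hc : σ.card = k + 1) :
    (X.faces.filter (fun τ => τ.card = k + 1 ∧ (σ ∩ τ).card = k ∧ σ ∪ τ ∉ X.faces ∧
        (σ \ τ) ∪ (τ \ σ) ∈ X.faces)).card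
      = ∑ j ∈ Finset.Icc 1 (k + 1), j * (X.dset σ j).card := by
  classical
  set S : Finset ((_ : Fin n) × Fin n) :=
    Finset.univ.sigma (fun u : Fin n => σ.filter
      (fun w => (¬ X.vLk u σ ∧ ∀ v ∈ σ, X.vLk u {v}) ∧ X.vLk u (σ.erase w))) with hS
  have step1 : (X.faces.filter (fun τ => τ.card = k + 1 ∧ (σ ∩ τ).card = k ∧ σ ∪ τ ∉ X.faces ∧
        (σ \ τ) ∪ (τ \ σ) ∈ X.faces)).card = S.card := by
    symm
    apply Finset.card_bij (fun s _ => insert s.1 (σ.erase s.2))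
    · rintro ⟨u, w⟩ hs
      rw [hS, Finset.mem_sigma, Finset.mem_filter] at hs
      obtain ⟨-, hw, ⟨h1, h2⟩, h3⟩ := hs
      have := stmt4_aux X σ hc u w hw h1 h2 h3
      simp only [Finset.mem_filter]
      exact ⟨this.1, this.2.1, this.2.2.1, this.2.2.2.1, this.2.2.2.2⟩
    · rintro ⟨u, w⟩ hs ⟨u', w'⟩ hs' heq
      dsimp only at heq
      rw [hS, Finset.mem_sigma, Finset.mem_filter] at hs hs'
      obtain ⟨-, hw, ⟨h1, h2⟩, h3⟩ := hs
      obtain ⟨-, hw', ⟨h1', h2'⟩, h3'⟩ := hs'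
      have huσ : u ∉ σ := fun hu => (h2 u hu).1 (Finset.mem_singleton_self u)
      have hu'σ : u' ∉ σ := fun hu => (h2' u' hu).1 (Finset.mem_singleton_self u')
      have huu : u = u' := by
        have : u ∈ insert u' (σ.erase w') := heq ▸ Finset.mem_insert_self u (σ.erase w)
        rcases Finset.mem_insert.mp this with h | h
        · exact h
        · exact absurd (Finset.mem_of_mem_erase h) huσ
      subst huu
      have hww : w = w' := by
        by_contra hne
        have : w ∈ insert u (σ.erase w) := by
          rw [heq]
          exact Finset.mem_insert_of_mem (Finset.mem_erase.mpr ⟨fun h => hne h, hw⟩)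
        rcases Finset.mem_insert.mp this with h | h
        · exact huσ (h ▸ hw)
        · exact (Finset.notMem_erase w σ) h
      subst hww
      rfl
    · intro τ hτ
      rw [Finset.mem_filter] at hτ
      obtain ⟨hτf, hτc, hcap, hcup, hsym⟩ := hτ
      have hd1 : (σ \ τ).card = 1 := by
        have := Finset.card_sdiff_add_card_inter σ τ
        omega
      have hd2 : (τ \ σ).card = 1 := by
        have := Finset.card_sdiff_add_card_inter τ σ
        rw [Finset.inter_comm] at this
        omega
      obtain ⟨w, hwe⟩ := Finset.card_eq_one.mp hd1
      obtain ⟨u, hue⟩ := Finset.card_eq_one.mp hd2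
      have hwσ : w ∈ σ := (Finset.mem_sdiff.mp (hwe ▸ Finset.mem_singleton_self w)).1
      have hwτ : w ∉ τ := (Finset.mem_sdiff.mp (hwe ▸ Finset.mem_singleton_self w)).2
      have huτ : u ∈ τ := (Finset.mem_sdiff.mp (hue ▸ Finset.mem_singleton_self u)).1
      have huσ : u ∉ σ := (Finset.mem_sdiff.mp (hue ▸ Finset.mem_singleton_self u)).2
      have hτeq : insert u (σ.erase w) = τ := by
        ext x
        simp only [Finset.mem_insert, Finset.mem_erase]
        constructor
        · rintro (rfl | ⟨hxw, hxσ⟩)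
          · exact huτ
          · by_contra hxτ
            have : x ∈ σ \ τ := Finset.mem_sdiff.mpr ⟨hxσ, hxτ⟩
            rw [hwe, Finset.mem_singleton] at this
            exact hxw this
        · intro hxτ
          by_cases hxσ : x ∈ σ
          · refine Or.inr ⟨fun h => hwτ (h ▸ hxτ), hxσ⟩
          · have : x ∈ τ \ σ := Finset.mem_sdiff.mpr ⟨hxτ, hxσ⟩
            rw [hue, Finset.mem_singleton] at this
            exact Or.inl this
      have hcupeq : σ ∪ τ = insert u σ := by
        ext x
        simp only [Finset.mem_union, Finset.mem_insert]
        constructor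
        · rintro (hx | hx)
          · exact Or.inr hx
          · rw [← hτeq, Finset.mem_insert, Finset.mem_erase] at hx
            rcases hx with rfl | ⟨_, hx⟩
            · exact Or.inl rfl
            · exact Or.inr hx
        · rintro (rfl | hx)
          · exact Or.inr huτ
          · exact Or.inl hx
      have h2 : ∀ v ∈ σ, X.vLk u {v} := by
        intro v hv
        refine ⟨fun h => huσ ((Finset.mem_singleton.mp h) ▸ hv), ?_⟩
        by_cases hvw : v = w
        · subst hvw
          have : ({v} : Finset (Fin n)) ∪ {u} = insert u {v} := by
            ext x; simp [or_comm]
          rw [← this, ← hwe, ← hue]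
          exact hsym
        · apply X.down_closed hτf
          intro x hx
          rcases Finset.mem_insert.mp hx with rfl | hx
          · exact huτ
          · rw [Finset.mem_singleton] at hx
            subst hx
            rw [← hτeq]
            exact Finset.mem_insert_of_mem (Finset.mem_erase.mpr ⟨hvw, hv⟩)
      refine ⟨⟨u, w⟩, ?_, hτeq⟩
      rw [hS, Finset.mem_sigma, Finset.mem_filter]
      refine ⟨Finset.mem_univ u, hwσ, ⟨?_, h2⟩, ?_⟩
      · intro h
        exact hcup (hcupeq ▸ h.2)
      · refine ⟨fun h => huσ (Finset.mem_of_mem_erase h), ?_⟩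
        rw [hτeq]
        exact hτf
  rw [step1, hS, Finset.card_sigma]
  have hcard : ∀ u : Fin n,
      (σ.filter (fun w => (¬ X.vLk u σ ∧ ∀ v ∈ σ, X.vLk u {v}) ∧ X.vLk u (σ.erase w))).card
      = if (¬ X.vLk u σ ∧ ∀ v ∈ σ, X.vLk u {v})
        then (σ.filter (fun w => X.vLk u (σ.erase w))).card else 0 := by
    intro u
    by_cases hCu : ¬ X.vLk u σ ∧ ∀ v ∈ σ, X.vLk u {v}
    · rw [if_pos hCu]
      congr 1
      apply Finset.filter_congr
      intro w _
      exact ⟨fun h => h.2, fun h => ⟨hCu, h⟩⟩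
    · rw [if_neg hCu]
      rw [Finset.card_eq_zero, Finset.filter_eq_empty_iff]
      intro w _
      exact fun h => hCu h.1
  simp only [hcard]
  rw [Finset.sum_ite, Finset.sum_const_zero, add_zero]
  have hfib : ∀ u ∈ Finset.univ.filter (fun u => ¬ X.vLk u σ ∧ ∀ v ∈ σ, X.vLk u {v}),
      (σ.filter (fun w => X.vLk u (σ.erase w))).card ∈ Finset.range (k + 2) := by
    intro u _
    rw [Finset.mem_range]
    have := Finset.card_filter_le σ (fun w => X.vLk u (σ.erase w))
    omega
  rw [← Finset.sum_fiberwise_of_maps_to hfib]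
  have hdset : ∀ j : ℕ,
      (Finset.univ.filter (fun u => ¬ X.vLk u σ ∧ ∀ v ∈ σ, X.vLk u {v})).filter
        (fun u => (σ.filter (fun w => X.vLk u (σ.erase w))).card = j) = X.dset σ j := by
    intro j
    rw [SC.dset, Finset.filter_filter]
    apply Finset.filter_congr
    intro u _
    tauto
  have hterm : ∀ j ∈ Finset.range (k + 2),
      (∑ u ∈ (Finset.univ.filter (fun u => ¬ X.vLk u σ ∧ ∀ v ∈ σ, X.vLk u {v})).filter
        (fun u => (σ.filter (fun w => X.vLk u (σ.erase w))).card = j),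
        (σ.filter (fun w => X.vLk u (σ.erase w))).card) = j * (X.dset σ j).card := by
    intro j _
    rw [Finset.sum_congr rfl (fun u hu => (Finset.mem_filter.mp hu).2), Finset.sum_const,
      smul_eq_mul, hdset j, mul_comm]
  rw [Finset.sum_congr rfl hterm]
  symm
  apply Finset.sum_subset
  · intro j hj
    rw [Finset.mem_Icc] at hj
    rw [Finset.mem_range]
    omega
  · intro j hj hj2
    rw [Finset.mem_range] at hj
    rw [Finset.mem_Icc] at hj2
    have : j = 0 := by omega
    subst this
    simp
end

section
/- Let X be a simplicial complex on n vertices and k \geq 0. Define the matrix P indexed by X(k) with P(\sigma,\sigma) = \sum_{v \in \sigma} deg_{G_X}(v) - deg_X(\sigma), P(\sigma,\tau) = -(\sigma:\sigma\cap\tau)(\tau:\sigma\cap\tau) if \sigma \sim_1 \tau, and 0 otherwise. Then the largest eigenvalue of P is at most kn + max_{\sigma \in X(k)} \sum_{j=0}^{k+1} (j+1)|\sigma[j]|. -/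
open Finset Matrix BigOperators

/-! By Gershgorin's circle theorem every eigenvalue of `P` is at most `P(σ,σ) + ∑_{τ ≠ σ} |P(σ,τ)|`
for some face `σ`, and this row sum is bounded by double counting. A vertex `u` adjacent to every
vertex of `σ` lies either in `lk_X(σ)`, which contributes to `deg_X(σ)`, or in some `σ[j]`; every
other vertex is adjacent to at most `k` vertices of `σ`, whence `∑_{v ∈ σ} deg(v) ≤ kn + deg_X(σ) +
∑_j |σ[j]|`. A face `τ ∼₁ σ` has the form `σ - w + u` with `u ∈ σ[j]` and `u ∈ lk_X(σ - w)`, so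
there are at most `∑_j j |σ[j]|` of them, and each contributes `1` to the off-diagonal row sum. -/

lemma Finset.exists_eq_insert_erase_of_card_inter {α : Type*} [DecidableEq α] {k : ℕ}
    {s t : Finset α} (hs : s.card = k + 1) (ht : t.card = k + 1) (hst : (s ∩ t).card = k) :
    ∃ u ∉ s, ∃ w ∈ s, t = insert u (s.erase w) := by
  have hts : (t \ s).card = 1 := by rw [card_sdiff, ht, hst]; omega
  have hst' : (s \ t).card = 1 := by rw [card_sdiff, hs, inter_comm, hst]; omega
  obtain ⟨u, hu⟩ := card_eq_one.1 hts
  obtain ⟨w, hw⟩ := card_eq_one.1 hst'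
  have hu' := fun x => congrArg (x ∈ ·) hu
  have hw' := fun x => congrArg (x ∈ ·) hw
  simp only [mem_sdiff, mem_singleton, eq_iff_iff] at hu' hw'
  refine ⟨u, ((hu' u).2 rfl).2, w, ((hw' w).2 rfl).1, ?_⟩
  ext x
  have hux := hu' x
  have hwx := hw' x
  simp only [mem_insert, mem_erase]
  grind

namespace SC

variable {n : ℕ}

lemma abs_iSgn_of_card_sdiff_eq_one {σ τ : Finset (Fin n)} (h : (τ \ σ).card = 1) :
    |iSgn σ τ| = 1 := by
  obtain ⟨u, hu⟩ := card_eq_one.1 h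
  rw [iSgn, hu, sum_singleton, abs_pow, abs_neg, abs_one, one_pow]

variable (X : SC n)

def lkVerts (σ : Finset (Fin n)) : Finset (Fin n) :=
  univ.filter fun u => X.vLk u σ

/-- The vertices adjacent to every vertex of `σ` but outside `lk_X(σ)`: the union of the `σ[j]`. -/
def nbrsOutsideLk (σ : Finset (Fin n)) : Finset (Fin n) :=
  univ.filter fun u => ¬ X.vLk u σ ∧ ∀ v ∈ σ, X.vLk u {v}

/-- The vertices `w ∈ σ` with `u ∈ lk_X(σ \ {w})`, counted by the index `j` of `σ[j]`. -/
def exchangeVerts (σ : Finset (Fin n)) (u : Fin n) : Finset (Fin n) :=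
  σ.filter fun w => X.vLk u (σ.erase w)

/-- The faces `τ` with `σ ∼₁ τ`. -/
def simOneNbrs (k : ℕ) (σ : X.face (k+1)) : Finset (X.face (k+1)) :=
  (univ.erase σ).filter fun τ => (σ.1 ∩ τ.1).card = k ∧ σ.1 ∪ τ.1 ∉ X.faces ∧
    (σ.1 \ τ.1) ∪ (τ.1 \ σ.1) ∈ X.faces

lemma card_lkVerts_le_fdeg (σ : Finset (Fin n)) : (X.lkVerts σ).card ≤ X.fdeg σ := by
  refine card_le_card_of_injOn (insert · σ) (fun u hu => ?_) (fun u hu u' _ h => ?_)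
  · obtain ⟨-, huσ, hface⟩ := mem_filter.1 hu
    exact mem_filter.2 ⟨hface, card_insert_of_notMem huσ, subset_insert _ _⟩
  · exact (insert_inj (mem_filter.1 hu).2.1).1 h

lemma gdeg_eq_card_vLk (u : Fin n) : X.gdeg u = (univ.filter fun v => X.vLk v {u}).card := by
  simp only [gdeg, vLk, mem_singleton, pair_comm u]

lemma card_filter_vLk_le {k : ℕ} {σ : Finset (Fin n)} (hσ : σ.card = k + 1) (u : Fin n) :
    (σ.filter fun v => X.vLk u {v}).card ≤
      k + (if u ∈ X.lkVerts σ then 1 else 0) + (if u ∈ X.nbrsOutsideLk σ then 1 else 0) := by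
  by_cases hall : ∀ v ∈ σ, X.vLk u {v}
  · have hle := hσ ▸ card_filter_le σ fun v => X.vLk u {v}
    by_cases hlk : X.vLk u σ
    · have hu : u ∈ X.lkVerts σ := mem_filter.2 ⟨mem_univ _, hlk⟩
      rw [if_pos hu]
      omega
    · have hu : u ∈ X.nbrsOutsideLk σ := mem_filter.2 ⟨mem_univ _, hlk, hall⟩
      rw [if_pos hu]
      omega
  · push Not at hall
    obtain ⟨v, hv, hnv⟩ := hall
    have := card_lt_card (filter_ssubset.2 ⟨v, hv, hnv⟩ : σ.filter (fun v => X.vLk u {v}) ⊂ σ)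
    omega

lemma sum_gdeg_le {k : ℕ} {σ : Finset (Fin n)} (hσ : σ.card = k + 1) :
    ∑ v ∈ σ, X.gdeg v ≤ k * n + (X.lkVerts σ).card + (X.nbrsOutsideLk σ).card := by
  calc ∑ v ∈ σ, X.gdeg v = ∑ u, (σ.filter fun v => X.vLk u {v}).card := by
        simp only [gdeg_eq_card_vLk, card_filter]
        exact sum_comm
    _ ≤ ∑ u, (k + (if u ∈ X.lkVerts σ then 1 else 0) +
          (if u ∈ X.nbrsOutsideLk σ then 1 else 0)) :=
        sum_le_sum fun u _ => X.card_filter_vLk_le hσ u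
    _ = k * n + (X.lkVerts σ).card + (X.nbrsOutsideLk σ).card := by
        simp [sum_add_distrib, mul_comm]

lemma dset_eq_filter (σ : Finset (Fin n)) (j : ℕ) :
    X.dset σ j = (X.nbrsOutsideLk σ).filter fun u => (X.exchangeVerts σ u).card = j := by
  ext u
  simp only [dset, nbrsOutsideLk, mem_filter, and_assoc]
  rfl

lemma sum_succ_mul_card_dset {k : ℕ} {σ : Finset (Fin n)} (hσ : σ.card = k + 1) :
    ∑ j ∈ range (k+2), (j+1) * (X.dset σ j).card =
      ∑ u ∈ X.nbrsOutsideLk σ, (X.exchangeVerts σ u).card + (X.nbrsOutsideLk σ).card := by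
  have hmaps : ∀ u ∈ X.nbrsOutsideLk σ, (X.exchangeVerts σ u).card ∈ range (k+2) :=
    fun u _ => mem_range.2 (Nat.lt_succ_of_le (hσ ▸ card_filter_le _ _))
  rw [card_eq_sum_ones, ← sum_add_distrib,
    ← sum_fiberwise_of_maps_to' hmaps (fun j => j + 1)]
  simp [dset_eq_filter, mul_comm]

lemma card_simOneNbrs_le {k : ℕ} (σ : X.face (k+1)) :
    (X.simOneNbrs k σ).card ≤ ∑ u ∈ X.nbrsOutsideLk σ.1, (X.exchangeVerts σ.1 u).card := by
  set pairs := (X.nbrsOutsideLk σ.1).sigma (X.exchangeVerts σ.1)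
  have hsub : (X.simOneNbrs k σ).map (Function.Embedding.subtype _) ⊆
      pairs.image fun p => insert p.1 (σ.1.erase p.2) := by
    intro t ht
    obtain ⟨τ, hτ, rfl⟩ := mem_map.1 ht
    obtain ⟨-, hinter, hunion, hsymm⟩ := mem_filter.1 hτ
    obtain ⟨u, huσ, w, hwσ, hτ_eq⟩ :=
      exists_eq_insert_erase_of_card_inter σ.2.2 τ.2.2 hinter
    have hτ_face : insert u (σ.1.erase w) ∈ X.faces := hτ_eq ▸ τ.2.1
    refine mem_image.2 ⟨⟨u, w⟩, mem_sigma.2 ⟨mem_filter.2 ⟨mem_univ _, ?_, ?_⟩, ?_⟩, hτ_eq.symm⟩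
    · rintro ⟨-, hface⟩
      rw [hτ_eq, union_insert, union_eq_left.2 (erase_subset w σ.1)] at hunion
      exact hunion hface
    · intro v hv
      refine ⟨by grind, ?_⟩
      by_cases hvw : v = w
      · refine X.down_closed hsymm fun x => ?_
        simp only [hτ_eq, mem_insert, mem_singleton, mem_union, mem_sdiff, mem_erase]
        grind
      · refine X.down_closed hτ_face fun x => ?_
        simp only [mem_insert, mem_singleton, mem_erase]
        grind
    · exact mem_filter.2 ⟨hwσ, fun hu => huσ (mem_of_mem_erase hu), hτ_face⟩
  calc (X.simOneNbrs k σ).card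
      = ((X.simOneNbrs k σ).map (Function.Embedding.subtype _)).card := (card_map _).symm
    _ ≤ (pairs.image fun p => insert p.1 (σ.1.erase p.2)).card := card_le_card hsub
    _ ≤ pairs.card := card_image_le
    _ = ∑ u ∈ X.nbrsOutsideLk σ.1, (X.exchangeVerts σ.1 u).card := card_sigma _ _

lemma sum_abs_Pmat_erase {k : ℕ} (σ : X.face (k+1)) :
    ∑ τ ∈ univ.erase σ, |Pmat X k σ τ| = (X.simOneNbrs k σ).card := by
  rw [simOneNbrs, card_filter]
  push_cast
  refine sum_congr rfl fun τ hτ => ?_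
  simp only [Pmat, of_apply, if_neg (ne_of_mem_erase hτ).symm]
  split_ifs with hc
  · have hσ : (σ.1 \ (σ.1 ∩ τ.1)).card = 1 := by
      rw [sdiff_inter_self_left, card_sdiff, σ.2.2, inter_comm, hc.1]; omega
    have hτ : (τ.1 \ (σ.1 ∩ τ.1)).card = 1 := by
      rw [sdiff_inter_self_right, card_sdiff, τ.2.2, hc.1]; omega
    rw [abs_neg, abs_mul, abs_iSgn_of_card_sdiff_eq_one hσ, abs_iSgn_of_card_sdiff_eq_one hτ,
      mul_one]
  · exact abs_zero

lemma Pmat_diag_add_sum_abs_le {k : ℕ} (σ : X.face (k+1)) :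
    Pmat X k σ σ + ∑ τ ∈ univ.erase σ, |Pmat X k σ τ| ≤ k * n + maxD X k := by
  have hdeg := X.sum_gdeg_le σ.2.2
  have hlk := X.card_lkVerts_le_fdeg σ.1
  have hsim := X.card_simOneNbrs_le σ
  have hdset := X.sum_succ_mul_card_dset σ.2.2
  have hmax : ∑ j ∈ range (k+2), (j+1) * (X.dset σ.1 j).card ≤ maxD X k :=
    le_sup (f := fun σ : X.face (k+1) => ∑ j ∈ range (k+2), (j+1) * (X.dset σ.1 j).card)
      (mem_univ σ)
  have hnat : ∑ v ∈ σ.1, X.gdeg v + (X.simOneNbrs k σ).card ≤ k * n + X.fdeg σ.1 + maxD X k := by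
    omega
  have hreal : (∑ v ∈ σ.1, (X.gdeg v : ℝ)) + (X.simOneNbrs k σ).card ≤
      k * n + X.fdeg σ.1 + maxD X k := by
    exact_mod_cast hnat
  rw [sum_abs_Pmat_erase, Pmat, of_apply, if_pos rfl]
  linarith

end SC

theorem stmt5_general (n k : ℕ) (X : SC n)
    (μ : ℝ) (hμ : μ ∈ spectrum ℝ (Pmat X k)) :
    μ ≤ (k : ℝ) * n + (maxD X k : ℝ) := by
  rw [← Matrix.spectrum_toLin', ← Module.End.hasEigenvalue_iff_mem_spectrum] at hμ
  obtain ⟨σ, hσ⟩ := eigenvalue_mem_ball hμ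
  have hball := (abs_le.1 (Metric.mem_closedBall.1 hσ)).2
  simp only [Real.norm_eq_abs] at hball
  linarith [X.Pmat_diag_add_sum_abs_le σ]

/-- Every eigenvalue of the matrix `P` is at most
`kn + max_{σ ∈ X(k)} ∑_{j=0}^{k+1} (j+1)|σ[j]|`. -/
theorem stmt5 (n k : ℕ) (X : SC n) (hfull : ∀ v : Fin n, {v} ∈ X.faces)
    (μ : ℝ) (hμ : μ ∈ spectrum ℝ (Pmat X k)) :
    μ ≤ (k : ℝ) * n + (maxD X k : ℝ) :=
  stmt5_general n k X μ hμ
end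

section
/- Let X be a simplicial complex on n vertices and k \geq 0. Then L_k(X) = Q - P, where Q(\sigma,\sigma) = \sum_{v\in\sigma} deg_{G_X}(v) + k + 1, Q(\sigma,\tau) = (\sigma:\sigma\cap\tau)(\tau:\sigma\cap\tau) if \sigma \sim_2 \tau and 0 otherwise; and P(\sigma,\sigma) = \sum_{v\in\sigma} deg_{G_X}(v) - deg_X(\sigma), P(\sigma,\tau) = -(\sigma:\sigma\cap\tau)(\tau:\sigma\cap\tau) if \sigma \sim_1 \tau and 0 otherwise. -/
open Finset Matrix BigOperators

section Aux

variable {n : ℕ}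

lemma iSgn_of_sdiff {σ τ : Finset (Fin n)} {u : Fin n} (h : τ \ σ = {u}) :
    SC.iSgn σ τ = (-1 : ℝ) ^ (τ.filter (fun v => v < u)).card := by
  rw [SC.iSgn, h, Finset.sum_singleton]

lemma iSgn_mul_self {σ τ : Finset (Fin n)} (hsub : σ ⊆ τ)
    (hc : τ.card = σ.card + 1) : SC.iSgn σ τ * SC.iSgn σ τ = 1 := by
  have h1 : (τ \ σ).card = 1 := by rw [Finset.card_sdiff_of_subset hsub]; omega
  obtain ⟨u, hu⟩ := Finset.card_eq_one.mp h1
  rw [iSgn_of_sdiff hu, ← pow_add, ← two_mul, pow_mul, neg_one_sq, one_pow]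

lemma card_filter_insert_lt {s : Finset (Fin n)} {x a : Fin n} (hx : x ∉ s) :
    ((insert x s).filter (fun v => v < a)).card
      = (s.filter (fun v => v < a)).card + (if x < a then 1 else 0) := by
  rw [Finset.filter_insert]
  split
  · rw [Finset.card_insert_of_notMem (fun h => hx (Finset.mem_filter.mp h).1)]
  · rfl

lemma sign_identity {σ τ : Finset (Fin n)} {a b : Fin n}
    (ha : σ \ τ = {a}) (hb : τ \ σ = {b}) :
    SC.iSgn σ (σ ∪ τ) * SC.iSgn τ (σ ∪ τ) =
      -(SC.iSgn (σ ∩ τ) σ * SC.iSgn (σ ∩ τ) τ) := by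
  have haστ := Finset.mem_sdiff.mp (by rw [ha]; exact Finset.mem_singleton_self a)
  have hbτσ := Finset.mem_sdiff.mp (by rw [hb]; exact Finset.mem_singleton_self b)
  have hab : a ≠ b := fun h => hbτσ.2 (h ▸ haστ.1)
  have hu1 : σ ∪ τ = insert b σ := by
    rw [Finset.insert_eq, Finset.union_comm {b} σ, ← hb, Finset.union_sdiff_self_eq_union]
  have hu2 : σ ∪ τ = insert a τ := by
    rw [Finset.union_comm, Finset.insert_eq, Finset.union_comm {a} τ, ← ha,
      Finset.union_sdiff_self_eq_union]
  have hd1 : (σ ∪ τ) \ σ = {b} := by rw [Finset.union_sdiff_left, hb]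
  have hd2 : (σ ∪ τ) \ τ = {a} := by rw [Finset.union_sdiff_right, ha]
  have hd3 : σ \ (σ ∩ τ) = {a} := by rw [Finset.sdiff_inter_self_left, ha]
  have hd4 : τ \ (σ ∩ τ) = {b} := by
    rw [Finset.inter_comm, Finset.sdiff_inter_self_left, hb]
  rw [iSgn_of_sdiff hd1, iSgn_of_sdiff hd2, iSgn_of_sdiff hd3, iSgn_of_sdiff hd4]
  have h1 : ((σ ∪ τ).filter (fun v => v < b)).card
      = (τ.filter (fun v => v < b)).card + (if a < b then 1 else 0) := by
    rw [hu2, card_filter_insert_lt haστ.2]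
  have h2 : ((σ ∪ τ).filter (fun v => v < a)).card
      = (σ.filter (fun v => v < a)).card + (if b < a then 1 else 0) := by
    rw [hu1, card_filter_insert_lt hbτσ.2]
  rw [h1, h2]
  rcases lt_or_gt_of_ne hab with h | h
  · rw [if_pos h, if_neg (asymm h), pow_add, pow_add, pow_one, pow_zero]
    ring
  · rw [if_neg (asymm h), if_pos h, pow_add, pow_add, pow_one, pow_zero]
    ring

end Aux

/-- The decomposition `L_k(X) = Q - P`. -/
theorem stmt6 (n k : ℕ) (X : SC n) : X.lap k = Qmat X k - Pmat X k := by
  ext σ τ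
  simp only [SC.lap, Matrix.add_apply, Matrix.mul_apply, Matrix.conjTranspose_apply,
    SC.bdry, Matrix.of_apply, star_trivial, Matrix.sub_apply, Qmat, Pmat]
  by_cases hst : σ = τ
  · subst hst
    rw [if_pos rfl, if_pos rfl]
    have t1 : ∑ ρ : X.face (k+1+1),
        (if σ.1 ⊆ ρ.1 then SC.iSgn σ.1 ρ.1 else 0) *
          (if σ.1 ⊆ ρ.1 then SC.iSgn σ.1 ρ.1 else 0) = (X.fdeg σ.1 : ℝ) := by
      have step : ∀ ρ : X.face (k+1+1), (if σ.1 ⊆ ρ.1 then SC.iSgn σ.1 ρ.1 else 0) *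
          (if σ.1 ⊆ ρ.1 then SC.iSgn σ.1 ρ.1 else 0) = if σ.1 ⊆ ρ.1 then (1:ℝ) else 0 := by
        intro ρ
        by_cases h : σ.1 ⊆ ρ.1
        · rw [if_pos h, if_pos h, iSgn_mul_self h (by rw [ρ.2.2, σ.2.2])]
        · rw [if_neg h, if_neg h, mul_zero]
      rw [Finset.sum_congr rfl (fun ρ _ => step ρ), Finset.sum_boole]
      congr 1
      apply Finset.card_bij (fun ρ _ => ρ.1)
      · intro ρ hρ
        simp only [Finset.mem_filter] at hρ ⊢
        exact ⟨ρ.2.1, by rw [ρ.2.2, σ.2.2], hρ.2⟩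
      · intro ρ₁ _ ρ₂ _ h
        exact Subtype.ext h
      · intro b hb
        simp only [SC.fdeg, Finset.mem_filter] at hb
        exact ⟨⟨b, hb.1, by rw [hb.2.1, σ.2.2]⟩, by simp [hb.2.2], rfl⟩
    have t2 : ∑ ρ : X.face k,
        (if ρ.1 ⊆ σ.1 then SC.iSgn ρ.1 σ.1 else 0) *
          (if ρ.1 ⊆ σ.1 then SC.iSgn ρ.1 σ.1 else 0) = (k : ℝ) + 1 := by
      have step : ∀ ρ : X.face k, (if ρ.1 ⊆ σ.1 then SC.iSgn ρ.1 σ.1 else 0) *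
          (if ρ.1 ⊆ σ.1 then SC.iSgn ρ.1 σ.1 else 0) = if ρ.1 ⊆ σ.1 then (1:ℝ) else 0 := by
        intro ρ
        by_cases h : ρ.1 ⊆ σ.1
        · rw [if_pos h, if_pos h, iSgn_mul_self h (by rw [ρ.2.2, σ.2.2])]
        · rw [if_neg h, if_neg h, mul_zero]
      rw [Finset.sum_congr rfl (fun ρ _ => step ρ), Finset.sum_boole]
      have hcard : (Finset.univ.filter (fun ρ : X.face k => ρ.1 ⊆ σ.1)).card
          = (Finset.powersetCard k σ.1).card := by
        apply Finset.card_bij (fun ρ _ => ρ.1)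
        · intro ρ hρ
          simp only [Finset.mem_filter] at hρ
          exact Finset.mem_powersetCard.mpr ⟨hρ.2, ρ.2.2⟩
        · intro ρ₁ _ ρ₂ _ h
          exact Subtype.ext h
        · intro b hb
          obtain ⟨hsub, hc⟩ := Finset.mem_powersetCard.mp hb
          exact ⟨⟨b, X.down_closed σ.2.1 hsub, hc⟩, by simp [hsub], rfl⟩
      rw [hcard, Finset.card_powersetCard, σ.2.2, Nat.choose_succ_self_right]
      push_cast
      ring
    rw [t1, t2]
    ring
  · rw [if_neg hst, if_neg hst]
    have hcσ : σ.1.card = k + 1 := σ.2.2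
    have hcτ : τ.1.card = k + 1 := τ.2.2
    have hne : σ.1 ≠ τ.1 := fun h => hst (Subtype.ext h)
    have hile : (σ.1 ∩ τ.1).card ≤ k := by
      by_contra h
      push_neg at h
      have h1 : (σ.1 ∩ τ.1).card ≤ k + 1 := by
        have := Finset.card_le_card (Finset.inter_subset_left : σ.1 ∩ τ.1 ⊆ σ.1)
        omega
      have h2 : (σ.1 ∩ τ.1).card = k + 1 := le_antisymm h1 h
      have e1 : σ.1 ∩ τ.1 = σ.1 :=
        Finset.eq_of_subset_of_card_le Finset.inter_subset_left (by omega)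
      have e2 : σ.1 ∩ τ.1 = τ.1 :=
        Finset.eq_of_subset_of_card_le Finset.inter_subset_right (by omega)
      exact hne (e1 ▸ e2)
    by_cases hik : (σ.1 ∩ τ.1).card = k
    · -- |σ ∩ τ| = k
      have hua : (σ.1 \ τ.1).card = 1 := by
        have := Finset.card_inter_add_card_sdiff σ.1 τ.1
        omega
      have hub : (τ.1 \ σ.1).card = 1 := by
        have := Finset.card_inter_add_card_sdiff τ.1 σ.1
        rw [Finset.inter_comm] at this
        omega
      obtain ⟨a, ha⟩ := Finset.card_eq_one.mp hua
      obtain ⟨b, hb⟩ := Finset.card_eq_one.mp hub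
      have hcu : (σ.1 ∪ τ.1).card = k + 1 + 1 := by
        have := Finset.card_union_add_card_inter σ.1 τ.1
        omega
      have t2 : ∑ ρ : X.face k,
          (if ρ.1 ⊆ σ.1 then SC.iSgn ρ.1 σ.1 else 0) *
            (if ρ.1 ⊆ τ.1 then SC.iSgn ρ.1 τ.1 else 0)
          = SC.iSgn (σ.1 ∩ τ.1) σ.1 * SC.iSgn (σ.1 ∩ τ.1) τ.1 := by
        have hρ₁ : σ.1 ∩ τ.1 ∈ X.faces := X.down_closed σ.2.1 Finset.inter_subset_left
        rw [Finset.sum_eq_single (⟨σ.1 ∩ τ.1, hρ₁, hik⟩ : X.face k)]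
        · rw [if_pos Finset.inter_subset_left, if_pos Finset.inter_subset_right]
        · intro ρ _ hρne
          by_cases h1 : ρ.1 ⊆ σ.1
          · by_cases h2 : ρ.1 ⊆ τ.1
            · exfalso
              apply hρne
              apply Subtype.ext
              exact Finset.eq_of_subset_of_card_le (Finset.subset_inter h1 h2)
                (by rw [hik, ρ.2.2])
            · rw [if_neg h2, mul_zero]
          · rw [if_neg h1, zero_mul]
        · intro h
          exact absurd (Finset.mem_univ _) h
      by_cases hu : σ.1 ∪ τ.1 ∈ X.faces
      · have t1 : ∑ ρ : X.face (k+1+1),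
            (if σ.1 ⊆ ρ.1 then SC.iSgn σ.1 ρ.1 else 0) *
              (if τ.1 ⊆ ρ.1 then SC.iSgn τ.1 ρ.1 else 0)
            = SC.iSgn σ.1 (σ.1 ∪ τ.1) * SC.iSgn τ.1 (σ.1 ∪ τ.1) := by
          rw [Finset.sum_eq_single (⟨σ.1 ∪ τ.1, hu, hcu⟩ : X.face (k+1+1))]
          · rw [if_pos Finset.subset_union_left, if_pos Finset.subset_union_right]
          · intro ρ _ hρne
            by_cases h1 : σ.1 ⊆ ρ.1
            · by_cases h2 : τ.1 ⊆ ρ.1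
              · exfalso
                apply hρne
                apply Subtype.ext
                exact (Finset.eq_of_subset_of_card_le (Finset.union_subset h1 h2)
                  (by rw [hcu, ρ.2.2])).symm
              · rw [if_neg h2, mul_zero]
            · rw [if_neg h1, zero_mul]
          · intro h
            exact absurd (Finset.mem_univ _) h
        rw [t1, t2, sign_identity ha hb]
        rw [if_neg (fun h => h.2.1 hu), if_neg (fun h => h.2.1 hu)]
        ring
      · have t1 : ∑ ρ : X.face (k+1+1),
            (if σ.1 ⊆ ρ.1 then SC.iSgn σ.1 ρ.1 else 0) *
              (if τ.1 ⊆ ρ.1 then SC.iSgn τ.1 ρ.1 else 0) = 0 := by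
          apply Finset.sum_eq_zero
          intro ρ _
          by_cases h1 : σ.1 ⊆ ρ.1
          · by_cases h2 : τ.1 ⊆ ρ.1
            · exfalso
              apply hu
              have : ρ.1 = σ.1 ∪ τ.1 :=
                (Finset.eq_of_subset_of_card_le (Finset.union_subset h1 h2)
                  (by rw [hcu, ρ.2.2])).symm
              rw [← this]
              exact ρ.2.1
            · rw [if_neg h2, mul_zero]
          · rw [if_neg h1, zero_mul]
        rw [t1, t2, zero_add]
        by_cases hw : (σ.1 \ τ.1) ∪ (τ.1 \ σ.1) ∈ X.faces
        · rw [if_neg (fun h => h.2.2 hw), if_pos ⟨hik, hu, hw⟩]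
          ring
        · rw [if_pos ⟨hik, hu, hw⟩, if_neg (fun h => hw h.2.2)]
          ring
    · -- |σ ∩ τ| < k
      have hilt : (σ.1 ∩ τ.1).card < k := lt_of_le_of_ne hile hik
      have t1 : ∑ ρ : X.face (k+1+1),
          (if σ.1 ⊆ ρ.1 then SC.iSgn σ.1 ρ.1 else 0) *
            (if τ.1 ⊆ ρ.1 then SC.iSgn τ.1 ρ.1 else 0) = 0 := by
        apply Finset.sum_eq_zero
        intro ρ _
        by_cases h1 : σ.1 ⊆ ρ.1
        · by_cases h2 : τ.1 ⊆ ρ.1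
          · exfalso
            have h3 : (σ.1 ∪ τ.1).card ≤ k + 1 + 1 := by
              have := Finset.card_le_card (Finset.union_subset h1 h2)
              rw [ρ.2.2] at this
              exact this
            have h4 := Finset.card_union_add_card_inter σ.1 τ.1
            omega
          · rw [if_neg h2, mul_zero]
        · rw [if_neg h1, zero_mul]
      have t2 : ∑ ρ : X.face k,
          (if ρ.1 ⊆ σ.1 then SC.iSgn ρ.1 σ.1 else 0) *
            (if ρ.1 ⊆ τ.1 then SC.iSgn ρ.1 τ.1 else 0) = 0 := by
        apply Finset.sum_eq_zero
        intro ρ _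
        by_cases h1 : ρ.1 ⊆ σ.1
        · by_cases h2 : ρ.1 ⊆ τ.1
          · exfalso
            have h3 : ρ.1.card ≤ (σ.1 ∩ τ.1).card :=
              Finset.card_le_card (Finset.subset_inter h1 h2)
            rw [ρ.2.2] at h3
            omega
          · rw [if_neg h2, mul_zero]
        · rw [if_neg h1, zero_mul]
      rw [t1, t2, if_neg (fun h => hik h.1), if_neg (fun h => hik h.1)]
      ring
end

section
/- Let X be a simplicial complex on n vertices and k \geq 0. The matrix Q indexed by X(k), defined by Q(\sigma,\sigma) = \sum_{v\in\sigma} deg_{G_X}(v) + k + 1, Q(\sigma,\tau) = (\sigma:\sigma\cap\tau)(\tau:\sigma\cap\tau) if \sigma \sim_2 \tau and 0 otherwise, is the principal submatrix of the (k+1)-th additive compound (L(G_X)+J)^{[k+1]} with rows and columns indexed by X(k). -/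
open Finset Matrix BigOperators

/-- The matrix `Q` is the principal submatrix of the `(k+1)`-st additive
compound `(L(G_X)+J)^{[k+1]}` with rows and columns indexed by `X(k)`. -/

theorem stmt7 (n k : ℕ) (X : SC n) (σ τ : X.face (k+1)) :
    Qmat X k σ τ = addCompound (X.glap + Jmat n) (k+1) ⟨σ.1, σ.2.2⟩ ⟨τ.1, τ.2.2⟩ := by
  classical
  by_cases h : σ.1 = τ.1
  · have hst : σ = τ := Subtype.ext h
    subst hst
    simp only [Qmat, addCompound, Matrix.of_apply, if_pos rfl, Matrix.add_apply, SC.glap,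
      Jmat, Matrix.of_apply, if_pos rfl]
    rw [Finset.sum_add_distrib, Finset.sum_const, σ.2.2]
    push_cast
    ring
  · have hne : (⟨σ.1, σ.2.2⟩ : {S : Finset (Fin n) // S.card = k+1}) ≠ ⟨τ.1, τ.2.2⟩ := by
      simpa [Subtype.ext_iff] using h
    have hQne : σ ≠ τ := fun e => h (congrArg Subtype.val e)
    simp only [Qmat, addCompound, Matrix.of_apply, if_neg hQne, if_neg hne]
    have hk1 : k + 1 - 1 = k := rfl
    rw [hk1]
    by_cases hc : (σ.1 ∩ τ.1).card = k
    · have hcard : σ.1.card = k + 1 := σ.2.2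
      have hcard' : τ.1.card = k + 1 := τ.2.2
      have hσd : (σ.1 \ τ.1).card = 1 := by
        have := Finset.card_sdiff_add_card_inter σ.1 τ.1
        omega
      have hτd : (τ.1 \ σ.1).card = 1 := by
        have := Finset.card_sdiff_add_card_inter τ.1 σ.1
        rw [Finset.inter_comm] at this
        omega
      obtain ⟨i, hi⟩ := Finset.card_eq_one.mp hσd
      obtain ⟨j, hj⟩ := Finset.card_eq_one.mp hτd
      have hi' : i ∈ σ.1 \ τ.1 := hi ▸ Finset.mem_singleton_self i
      have hj' : j ∈ τ.1 \ σ.1 := hj ▸ Finset.mem_singleton_self j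
      have hij : i ≠ j := by
        intro e
        exact (Finset.mem_sdiff.mp hj').2 (e ▸ (Finset.mem_sdiff.mp hi').1)
      have hu : ({i} : Finset (Fin n)) ∪ {j} = insert i {j} := (Finset.insert_eq i {j}).symm
      have hsub : insert i {j} ⊆ σ.1 ∪ τ.1 := by
        intro x hx
        rcases Finset.mem_insert.mp hx with rfl | hx
        · exact Finset.mem_union_left _ (Finset.mem_sdiff.mp hi').1
        · rw [Finset.mem_singleton] at hx
          subst hx
          exact Finset.mem_union_right _ (Finset.mem_sdiff.mp hj').1
      rw [if_pos hc, hi, hj, Finset.sum_singleton, Finset.sum_singleton]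
      have hentry : (X.glap + Jmat n) i j =
          (if insert i {j} ∈ X.faces then (-1 : ℝ) else 0) + 1 := by
        simp [SC.glap, Jmat, hij, Matrix.add_apply]
      rw [hentry]
      by_cases hm : insert i {j} ∈ X.faces
      · rw [if_pos hm]
        rw [if_neg (fun hh => hh.2.2 (hu ▸ hm))]
        ring
      · rw [if_neg hm]
        have hU : σ.1 ∪ τ.1 ∉ X.faces := fun hU => hm (X.down_closed hU hsub)
        rw [if_pos ⟨hc, hU, fun hh => hm (hu ▸ hh)⟩]
        show SC.iSgn _ _ * SC.iSgn _ _ = SC.iSgn _ _ * SC.iSgn _ _ * (0 + 1)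
        ring
    · rw [if_neg hc]
      rw [if_neg (fun hh => hc hh.1)]
end

section
/- Let X be a simplicial complex and X' a subcomplex of X. Then for all k \geq 0 and 1 \leq i \leq f_k(X'), \lambda_i(L_k(X')) \geq \lambda_i(L_k(X)) - (k+2) max_{\sigma \in X'(k)} (deg_X(\sigma) - deg_{X'}(\sigma)). -/
open Finset Matrix BigOperators

/-
The principal submatrix of `L_k(X)` on the `k`-faces of `X'` and `L_k(X')` have the same
down-part, so their difference is `∑ ρ, ∂ρ ∂ρᵀ` over the `(k+1)`-faces `ρ ∈ X \ X'`. A row `σ`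
of this difference meets at most `deg_X σ - deg_X' σ` such faces `ρ`, each contributing at most
`k + 2` entries of absolute value `1`; by Gershgorin its quadratic form is bounded by
`(k + 2) max_σ (deg_X σ - deg_X' σ)`. Cauchy interlacing (`λ_i(L_k(X))` is at most the `i`-th
eigenvalue of the principal submatrix) and Weyl's inequality, both consequences of the easy half of
the Courant–Fischer min-max principle, conclude.
-/

open Module Submodule
open scoped InnerProductSpace RealInnerProductSpace

namespace OrthonormalBasis

variable {ι E : Type*} [Fintype ι] [NormedAddCommGroup E] [InnerProductSpace ℝ E]
  (b : OrthonormalBasis ι ℝ E)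

lemma inner_eq_zero_of_mem_span_image {S : Set ι} {j : ι} (hj : j ∉ S) {x : E}
    (hx : x ∈ span ℝ (b '' S)) : ⟪b j, x⟫ = 0 := by
  obtain ⟨l, hl, rfl⟩ := (Finsupp.mem_span_image_iff_linearCombination ℝ).1 hx
  rw [real_inner_comm]
  exact b.orthonormal.inner_finsupp_eq_zero hj hl

lemma finrank_span_image (S : Finset ι) : finrank ℝ (span ℝ (b '' S)) = S.card := by
  rw [Set.image_eq_range]
  exact (finrank_span_eq_card
    (b.orthonormal.linearIndependent.comp _ Subtype.val_injective)).trans (by simp)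

variable {T : E →ₗ[ℝ] E} {μ : ι → ℝ} (hb : ∀ j, T (b j) = μ j • b j)
include hb

lemma inner_map_self_eq_sum (x : E) : ⟪T x, x⟫ = ∑ j, μ j * ⟪b j, x⟫ ^ 2 := by
  have hTx : T x = ∑ j, (μ j * ⟪b j, x⟫) • b j := by
    conv_lhs => rw [← b.sum_repr' x]
    simp only [map_sum, map_smul, hb, smul_smul, mul_comm]
  rw [hTx, sum_inner]
  refine Finset.sum_congr rfl fun j _ => ?_
  rw [real_inner_smul_left]
  ring

lemma inner_map_self_le_of_mem_span {S : Set ι} {c : ℝ} (hc : ∀ j ∈ S, μ j ≤ c) {x : E}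
    (hx : x ∈ span ℝ (b '' S)) : ⟪T x, x⟫ ≤ c * ‖x‖ ^ 2 := by
  rw [b.inner_map_self_eq_sum hb, ← b.sum_sq_inner_right, Finset.mul_sum]
  refine Finset.sum_le_sum fun j _ => ?_
  by_cases hj : j ∈ S
  · exact mul_le_mul_of_nonneg_right (hc j hj) (sq_nonneg _)
  · simp [b.inner_eq_zero_of_mem_span_image hj hx]

lemma le_inner_map_self_of_mem_span {S : Set ι} {c : ℝ} (hc : ∀ j ∈ S, c ≤ μ j) {x : E}
    (hx : x ∈ span ℝ (b '' S)) : c * ‖x‖ ^ 2 ≤ ⟪T x, x⟫ := by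
  have h := b.inner_map_self_le_of_mem_span (T := -T) (μ := -μ) (fun j => by simp [hb])
    (c := -c) (fun j hj => neg_le_neg (hc j hj)) hx
  simp only [LinearMap.neg_apply, inner_neg_left] at h
  linarith

end OrthonormalBasis

namespace LinearMap.IsSymmetric

variable {E F : Type*} [NormedAddCommGroup E] [InnerProductSpace ℝ E] [FiniteDimensional ℝ E]
  [NormedAddCommGroup F] [InnerProductSpace ℝ F] [FiniteDimensional ℝ F]
  {T : E →ₗ[ℝ] E} (hT : T.IsSymmetric) {N : ℕ} (hN : finrank ℝ E = N)

theorem eigenvalues_le_of_forall_inner_le (j : Fin N) {V : Submodule ℝ E}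
    (hV : N ≤ finrank ℝ V + j) {c : ℝ} (hc : ∀ x ∈ V, ⟪T x, x⟫ ≤ c * ‖x‖ ^ 2) :
    hT.eigenvalues hN j ≤ c := by
  set b := hT.eigenvectorBasis hN
  set U := span ℝ (b '' ↑(Finset.Iic j))
  have hU : finrank ℝ U = j + 1 := by rw [b.finrank_span_image, Fin.card_Iic]
  obtain ⟨x, hxU, hxV, hx0⟩ : ∃ x ∈ U, x ∈ V ∧ x ≠ 0 := by
    by_contra! h
    have := Submodule.finrank_add_finrank_le_of_disjoint (Submodule.disjoint_def.2 h)
    omega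
  have hlow : hT.eigenvalues hN j * ‖x‖ ^ 2 ≤ ⟪T x, x⟫ :=
    b.le_inner_map_self_of_mem_span (μ := hT.eigenvalues hN) (hT.apply_eigenvectorBasis hN)
      (fun i hi => hT.eigenvalues_antitone hN (Finset.mem_Iic.1 hi)) hxU
  exact le_of_mul_le_mul_right (hlow.trans (hc x hxV)) (by positivity)

theorem exists_forall_inner_le_eigenvalues (j : Fin N) :
    ∃ V : Submodule ℝ E, finrank ℝ V + j = N ∧
      ∀ x ∈ V, ⟪T x, x⟫ ≤ hT.eigenvalues hN j * ‖x‖ ^ 2 := by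
  set b := hT.eigenvectorBasis hN
  refine ⟨span ℝ (b '' ↑(Finset.Ici j)), ?_, fun x hx => ?_⟩
  · rw [b.finrank_span_image, Fin.card_Ici]
    omega
  · exact b.inner_map_self_le_of_mem_span (μ := hT.eigenvalues hN) (hT.apply_eigenvectorBasis hN)
      (fun i hi => hT.eigenvalues_antitone hN (Finset.mem_Ici.1 hi)) hx

theorem eigenvalues_le_add_of_forall_inner_sub_le {S : E →ₗ[ℝ] E} (hS : S.IsSymmetric) {c : ℝ}
    (h : ∀ x, ⟪(S - T) x, x⟫ ≤ c * ‖x‖ ^ 2) (j : Fin N) :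
    hS.eigenvalues hN j ≤ hT.eigenvalues hN j + c := by
  obtain ⟨V, hV, hTV⟩ := hT.exists_forall_inner_le_eigenvalues hN j
  refine hS.eigenvalues_le_of_forall_inner_le hN j hV.ge fun x hx => ?_
  have := h x
  rw [LinearMap.sub_apply, inner_sub_left] at this
  linarith [hTV x hx]

theorem eigenvalues_le_of_isometry {T' : F →ₗ[ℝ] F} (hT' : T'.IsSymmetric) {M : ℕ}
    (hM : finrank ℝ F = M) (φ : F →ₗᵢ[ℝ] E) (hφ : ∀ x, ⟪T (φ x), φ x⟫ = ⟪T' x, x⟫)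
    (j : Fin M) (j' : Fin N) (hj : N + j ≤ M + j') :
    hT.eigenvalues hN j' ≤ hT'.eigenvalues hM j := by
  obtain ⟨V, hV, hT'V⟩ := hT'.exists_forall_inner_le_eigenvalues hM j
  have hφV : finrank ℝ (V.map φ.toLinearMap) = finrank ℝ V :=
    LinearEquiv.finrank_eq (Submodule.equivMapOfInjective _ φ.injective V).symm
  refine hT.eigenvalues_le_of_forall_inner_le hN j' (V := V.map φ.toLinearMap) (by omega) ?_
  rintro _ ⟨y, hy, rfl⟩
  simpa [hφ, φ.norm_map] using hT'V y hy

end LinearMap.IsSymmetric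

namespace Matrix.IsHermitian

variable {m m' : Type*} [Fintype m] [DecidableEq m] [Fintype m'] [DecidableEq m']
  {A B : Matrix m m ℝ}

lemma eigList_eq (hA : A.IsHermitian) : eigList A = (List.ofFn hA.eigenvalues₀).reverse := by
  rw [eigList, dif_pos hA]
  refine List.Perm.eq_of_pairwise' (Multiset.pairwise_sort _ _)
    hA.eigenvalues₀_antitone.sortedGE_ofFn.reverse.pairwise ?_
  have : hA.eigenvalues = hA.eigenvalues₀ ∘ (Fintype.equivOfCardEq (Fintype.card_fin _)).symm :=
    rfl
  rw [← Multiset.coe_eq_coe, Multiset.sort_eq, Multiset.coe_reverse, ← Fin.univ_val_map, this,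
    ← Multiset.map_map]
  congr 1
  exact congrArg Finset.val (Finset.map_univ_equiv _)

-- Mathlib's `eigenvalues₀` are sorted decreasingly, `ithEig` counts from the bottom.
lemma ithEig_eq (hA : A.IsHermitian) {i : ℕ} (h1 : 1 ≤ i) (h2 : i ≤ Fintype.card m) :
    ithEig A i = hA.eigenvalues₀ ⟨Fintype.card m - i, by omega⟩ := by
  rw [ithEig, hA.eigList_eq, List.getD_eq_getElem _ _ (by simp; omega), List.getElem_reverse]
  simp only [List.getElem_ofFn, List.length_ofFn]
  congr 2
  omega

lemma ithEig_le_add_of_forall_inner_sub_le (hA : A.IsHermitian) (hB : B.IsHermitian) {c : ℝ}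
    (h : ∀ x, ⟪toEuclideanLin (A - B) x, x⟫ ≤ c * ‖x‖ ^ 2) {i : ℕ} (h1 : 1 ≤ i)
    (h2 : i ≤ Fintype.card m) :
    ithEig A i ≤ ithEig B i + c := by
  rw [hA.ithEig_eq h1 h2, hB.ithEig_eq h1 h2]
  exact (isSymmetric_toEuclideanLin_iff.mpr hB).eigenvalues_le_add_of_forall_inner_sub_le _
    (isSymmetric_toEuclideanLin_iff.mpr hA) (by simpa only [map_sub] using h) _

lemma ithEig_le_ithEig_submatrix (hA : A.IsHermitian) {f : m' → m} (hf : Function.Injective f)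
    {i : ℕ} (h1 : 1 ≤ i) (h2 : i ≤ Fintype.card m') :
    ithEig A i ≤ ithEig (A.submatrix f f) i := by
  have hcard := Fintype.card_le_of_injective f hf
  set P : Matrix m m' ℝ := (1 : Matrix m m ℝ).submatrix id f
  have hP : ∀ (Q : Matrix m m' ℝ) x y,
      ⟪toEuclideanLin Q x, toEuclideanLin P y⟫ = ⟪toEuclideanLin (Pᴴ * Q) x, y⟫ := by
    intro Q x y
    rw [toLpLin_mul (q := 2), LinearMap.comp_apply, toEuclideanLin_conjTranspose_eq_adjoint,
      LinearMap.adjoint_inner_left]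
  have hPP : Pᴴ * P = 1 := by
    ext a b; simp [P, Matrix.mul_apply, Matrix.one_apply, hf.eq_iff]
  have hPAP : Pᴴ * (A * P) = A.submatrix f f := by
    ext a b; simp [P, Matrix.mul_apply, Matrix.one_apply]
  let φ := (toEuclideanLin P).isometryOfInner fun x y => by rw [hP, hPP, toLpLin_one]; rfl
  rw [hA.ithEig_eq h1 (h2.trans hcard), (hA.submatrix f).ithEig_eq h1 h2]
  refine (isSymmetric_toEuclideanLin_iff.mpr hA).eigenvalues_le_of_isometry _
    (isSymmetric_toEuclideanLin_iff.mpr (hA.submatrix f)) _ φ (fun x => ?_) _ _ (by simp; omega)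
  rw [← hPAP, ← hP, toLpLin_mul (q := 2), LinearMap.comp_apply]
  rfl

end Matrix.IsHermitian

namespace Matrix

variable {m : Type*} [Fintype m] [DecidableEq m] {A : Matrix m m ℝ}

lemma le_of_hasEigenvalue_of_sum_abs_le {μ c : ℝ} (hμ : Module.End.HasEigenvalue (toLin' A) μ)
    (h : ∀ a, ∑ b, |A a b| ≤ c) : μ ≤ c := by
  obtain ⟨a, ha⟩ := eigenvalue_mem_ball hμ
  rw [Metric.mem_closedBall, Real.dist_eq] at ha
  have hrow := Finset.add_sum_erase Finset.univ (fun b => |A a b|) (Finset.mem_univ a)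
  simp only [Real.norm_eq_abs] at ha
  linarith [(abs_le.1 ha).2, le_abs_self (A a a), h a]

lemma IsHermitian.inner_toEuclideanLin_le_of_sum_abs_le (hA : A.IsHermitian) {c : ℝ}
    (h : ∀ a, ∑ b, |A a b| ≤ c) (x : EuclideanSpace ℝ m) :
    ⟪toEuclideanLin A x, x⟫ ≤ c * ‖x‖ ^ 2 := by
  have hT := isSymmetric_toEuclideanLin_iff.mpr hA
  have hN : finrank ℝ (EuclideanSpace ℝ m) = Fintype.card m := finrank_euclideanSpace
  refine (hT.eigenvectorBasis hN).inner_map_self_le_of_mem_span (μ := hT.eigenvalues hN)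
    (hT.apply_eigenvectorBasis hN) (S := Set.univ) (fun j _ => ?_) ?_
  · refine le_of_hasEigenvalue_of_sum_abs_le ?_ h
    rw [Module.End.hasEigenvalue_iff_mem_spectrum, spectrum_toLin', ← spectrum_toLpLin 2]
    exact (hT.hasEigenvalue_eigenvalues hN j).mem_spectrum
  · rw [Set.image_univ, ← (hT.eigenvectorBasis hN).coe_toBasis,
      (hT.eigenvectorBasis hN).toBasis.span_eq]
    trivial

end Matrix

namespace SC

variable {n : ℕ}

def incid (σ ρ : Finset (Fin n)) : ℝ := if σ ⊆ ρ then iSgn σ ρ else 0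

def facesOfCard (X : SC n) (j : ℕ) : Finset (Finset (Fin n)) := X.faces.filter (·.card = j)

lemma abs_incid {σ ρ : Finset (Fin n)} (h : ρ.card = σ.card + 1) :
    |incid σ ρ| = if σ ⊆ ρ then 1 else 0 := by
  unfold incid
  split_ifs with hσρ
  · obtain ⟨u, hu⟩ := card_eq_one.1 (by rw [card_sdiff_of_subset hσρ]; omega :
      (ρ \ σ).card = 1)
    rw [iSgn, hu, sum_singleton, abs_pow, abs_neg, abs_one, one_pow]
  · exact abs_zero

lemma sum_face_eq (X : SC n) (j : ℕ) (g : Finset (Fin n) → ℝ) :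
    ∑ σ : X.face j, g σ.1 = ∑ σ ∈ X.facesOfCard j, g σ :=
  (sum_subtype _ (fun _ => mem_filter) g).symm

lemma lap_apply (X : SC n) (k : ℕ) (σ τ : X.face (k+1)) :
    X.lap k σ τ = ∑ ρ ∈ X.facesOfCard (k+2), incid σ.1 ρ * incid τ.1 ρ +
      ∑ η ∈ X.facesOfCard k, incid η σ.1 * incid η τ.1 := by
  rw [← sum_face_eq, ← sum_face_eq]
  simp [lap, bdry, mul_apply, incid]

lemma lap_isHermitian (X : SC n) (k : ℕ) : (X.lap k).IsHermitian :=
  (isHermitian_mul_conjTranspose_self _).add (isHermitian_conjTranspose_mul_self _)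

lemma sum_abs_incid_le (X : SC n) (k : ℕ) {ρ : Finset (Fin n)} (hρ : ρ.card = k + 2) :
    ∑ τ : X.face (k+1), |incid τ.1 ρ| ≤ k + 2 := by
  rw [sum_face_eq X (k+1) (fun τ => |incid τ ρ|)]
  calc ∑ τ ∈ X.facesOfCard (k+1), |incid τ ρ|
      = ((X.facesOfCard (k+1)).filter (· ⊆ ρ)).card := by
        rw [← sum_boole]
        refine sum_congr rfl fun τ hτ => abs_incid ?_
        rw [(mem_filter.1 hτ).2, hρ]
    _ ≤ (ρ.powersetCard (k+1)).card := by
        exact_mod_cast card_le_card fun τ hτ =>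
          mem_powersetCard.2 ⟨(mem_filter.1 hτ).2, (mem_filter.1 (mem_filter.1 hτ).1).2⟩
    _ = k + 2 := by simp [hρ]; ring

lemma sum_abs_incid_eq_fdeg (X : SC n) {k : ℕ} {σ : Finset (Fin n)} (hσ : σ.card = k + 1) :
    ∑ ρ ∈ X.facesOfCard (k+2), |incid σ ρ| = X.fdeg σ := by
  have hdeg : X.fdeg σ = ((X.facesOfCard (k+2)).filter (σ ⊆ ·)).card := by
    rw [fdeg, facesOfCard, filter_filter, hσ]
  rw [hdeg, ← sum_boole]
  refine sum_congr rfl fun ρ hρ => abs_incid ?_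
  rw [(mem_filter.1 hρ).2, hσ]

section Subcomplex

variable {X X' : SC n} (hsub : X'.faces ⊆ X.faces)
include hsub

lemma facesOfCard_mono (j : ℕ) : X'.facesOfCard j ⊆ X.facesOfCard j :=
  filter_subset_filter _ hsub

lemma fdeg_mono (σ : Finset (Fin n)) : X'.fdeg σ ≤ X.fdeg σ :=
  card_le_card (filter_subset_filter _ hsub)

lemma sum_facesOfCard_incid_mul_eq {σ : Finset (Fin n)} (hσ : σ ∈ X'.faces) (j : ℕ)
    (g : Finset (Fin n) → ℝ) :
    ∑ η ∈ X.facesOfCard j, incid η σ * g η = ∑ η ∈ X'.facesOfCard j, incid η σ * g η := by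
  refine (sum_subset (facesOfCard_mono hsub j) fun η hηX hηX' => ?_).symm
  have hησ : ¬ η ⊆ σ := fun h =>
    hηX' (mem_filter.2 ⟨X'.down_closed hσ h, (mem_filter.1 hηX).2⟩)
  simp [incid, hησ]

def faceIncl (k : ℕ) : X'.face k ↪ X.face k :=
  Subtype.impEmbedding _ _ fun _ h => ⟨hsub h.1, h.2⟩

@[simp]
lemma faceIncl_val {k : ℕ} (σ : X'.face k) : (faceIncl hsub k σ).1 = σ.1 :=
  rfl

lemma lap_sub_lap_eq_sum (k : ℕ) (σ τ : X'.face (k+1)) :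
    X.lap k (faceIncl hsub _ σ) (faceIncl hsub _ τ) - X'.lap k σ τ =
      ∑ ρ ∈ X.facesOfCard (k+2) \ X'.facesOfCard (k+2), incid σ.1 ρ * incid τ.1 ρ := by
  rw [lap_apply, lap_apply, faceIncl_val, faceIncl_val, sum_facesOfCard_incid_mul_eq hsub σ.2.1,
    sum_sdiff_eq_sub (facesOfCard_mono hsub _)]
  ring

lemma sum_abs_lap_sub_lap_le (k : ℕ) (σ : X'.face (k+1)) :
    ∑ τ, |X.lap k (faceIncl hsub _ σ) (faceIncl hsub _ τ) - X'.lap k σ τ| ≤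
      (k + 2) * ((X.fdeg σ.1 - X'.fdeg σ.1 : ℕ) : ℝ) := by
  set R := X.facesOfCard (k+2) \ X'.facesOfCard (k+2)
  have hR : ∀ ρ ∈ R, ρ.card = k + 2 := fun ρ hρ => (mem_filter.1 (mem_sdiff.1 hρ).1).2
  calc ∑ τ, |X.lap k (faceIncl hsub _ σ) (faceIncl hsub _ τ) - X'.lap k σ τ|
      = ∑ τ : X'.face (k+1), |∑ ρ ∈ R, incid σ.1 ρ * incid τ.1 ρ| := by
        simp_rw [lap_sub_lap_eq_sum]
        rfl
    _ ≤ ∑ τ : X'.face (k+1), ∑ ρ ∈ R, |incid σ.1 ρ| * |incid τ.1 ρ| :=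
        sum_le_sum fun τ _ => (abs_sum_le_sum_abs _ _).trans_eq (by simp_rw [abs_mul])
    _ = ∑ ρ ∈ R, |incid σ.1 ρ| * ∑ τ : X'.face (k+1), |incid τ.1 ρ| := by
        rw [sum_comm]
        simp_rw [mul_sum]
    _ ≤ ∑ ρ ∈ R, |incid σ.1 ρ| * (k + 2) :=
        sum_le_sum fun ρ hρ =>
          mul_le_mul_of_nonneg_left (sum_abs_incid_le X' k (hR ρ hρ)) (abs_nonneg _)
    _ = (k + 2) * ((X.fdeg σ.1 - X'.fdeg σ.1 : ℕ) : ℝ) := by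
        rw [← sum_mul, sum_sdiff_eq_sub (facesOfCard_mono hsub _), sum_abs_incid_eq_fdeg X σ.2.2,
          sum_abs_incid_eq_fdeg X' σ.2.2, Nat.cast_sub (fdeg_mono hsub _)]
        ring

end Subcomplex

end SC

/-- **Theorem 1.8.** For a subcomplex `X' ⊆ X`, `k ≥ 0`, `1 ≤ i ≤ f_k(X')`:
`λ_i(L_k(X')) ≥ λ_i(L_k(X)) - (k+2) max_{σ ∈ X'(k)} (deg_X(σ) - deg_{X'}(σ))`. -/
theorem stmt12 (n k : ℕ) (X X' : SC n) (hsub : X'.faces ⊆ X.faces)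
    (i : ℕ) (h1 : 1 ≤ i) (h2 : i ≤ Fintype.card (X'.face (k+1))) :
    ithEig (X'.lap k) i ≥ ithEig (X.lap k) i -
      ((k : ℝ) + 2) *
        ((Finset.univ.sup fun σ : X'.face (k+1) => X.fdeg σ.1 - X'.fdeg σ.1 : ℕ) : ℝ) := by
  set D := Finset.univ.sup fun σ : X'.face (k+1) => X.fdeg σ.1 - X'.fdeg σ.1
  set ι := SC.faceIncl hsub (k+1)
  have hrow : ∀ σ, ∑ τ, |((X.lap k).submatrix ι ι - X'.lap k) σ τ| ≤ (k + 2) * D := fun σ =>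
    (SC.sum_abs_lap_sub_lap_le hsub k σ).trans <| by
      gcongr
      exact le_sup (f := fun σ : X'.face (k+1) => X.fdeg σ.1 - X'.fdeg σ.1) (mem_univ σ)
  have hB := (X.lap_isHermitian k).submatrix ι
  rw [ge_iff_le, sub_le_iff_le_add]
  calc ithEig (X.lap k) i
      ≤ ithEig ((X.lap k).submatrix ι ι) i :=
        (X.lap_isHermitian k).ithEig_le_ithEig_submatrix ι.injective h1 h2
    _ ≤ ithEig (X'.lap k) i + (k + 2) * D :=
        hB.ithEig_le_add_of_forall_inner_sub_le (X'.lap_isHermitian k)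
          ((hB.sub (X'.lap_isHermitian k)).inner_toEuclideanLin_le_of_sum_abs_le hrow) h1 h2
end
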